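/- arXiv:1906.09452 — 6 statements merged into one kernel-verified Lean document; each statement's English description precedes it below -/
import Mathlib

section
/- Let Ω ⊂ ℝ³ be a bounded convex open set, S a finite nonempty set of points in Ω, and suppose d := min over x ∈ ∂Ω, s ∈ S of |x − s| is attained at x₀ ∈ ∂Ω and s_k ∈ S. Then for every s ∈ S with s ≠ s_k, one has |x₀ − s| > d; that is, the minimizing source point for a boundary minimizer x₀ is unique. -/
open Metric

/-- A ball around an interior point, whose radius is at most the distance to the
frontier, stays inside an open set. -/
lemma aux_ball_subset {E : Type*} [NormedAddCommGroup E] [NormedSpace ℝ E]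
    (Ω : Set E) (hΩo : IsOpen Ω) (c : E) (hc : c ∈ Ω) (d : ℝ)
    (hfar : ∀ x ∈ frontier Ω, d ≤ dist x c) : ball c d ⊆ Ω := by
  rcases le_or_gt d 0 with hd | hd
  · simp [ball_eq_empty.2 hd]
  have hsub : ball c d ⊆ Ω ∪ (closure Ω)ᶜ := by
    intro x hx
    rcases em (x ∈ closure Ω) with h | h
    · rw [closure_eq_self_union_frontier] at h
      rcases h with h | h
      · exact Or.inl h
      · exact absurd (hfar x h) (not_le.2 (by simpa [mem_ball, dist_comm] using hx))
    · exact Or.inr h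
  exact (convex_ball c d).isPreconnected.subset_left_of_subset_union hΩo
    (isOpen_compl_iff.2 isClosed_closure)
    (Set.disjoint_left.2 fun x hx hx' => hx' (subset_closure hx)) hsub
    ⟨c, mem_ball_self hd, hc⟩

/-- Lemma 2.1: the minimizing source point for a boundary minimizer is unique. -/
theorem stmt_0 (Ω : Set (EuclideanSpace ℝ (Fin 3)))
    (hΩo : IsOpen Ω) (hΩc : Convex ℝ Ω) (hΩb : Bornology.IsBounded Ω)
    (S : Finset (EuclideanSpace ℝ (Fin 3))) (hS : S.Nonempty) (hSΩ : (↑S : Set _) ⊆ Ω)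
    (x₀ : EuclideanSpace ℝ (Fin 3)) (hx₀ : x₀ ∈ frontier Ω)
    (sk : EuclideanSpace ℝ (Fin 3)) (hsk : sk ∈ S)
    (hmin : ∀ x ∈ frontier Ω, ∀ s ∈ S, dist x₀ sk ≤ dist x s) :
    ∀ s ∈ S, s ≠ sk → dist x₀ sk < dist x₀ s := by
  intro s hs hne
  by_contra hcon
  push_neg at hcon
  have heq : dist x₀ s = dist x₀ sk := le_antisymm hcon (hmin x₀ hx₀ s hs)
  -- x₀ is not in Ω
  have hx₀Ω : x₀ ∉ Ω := by
    have := hΩo.frontier_eq ▸ hx₀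
    exact this.2
  -- the two balls of radius d around s and sk are inside Ω
  have hballs : ∀ c ∈ S, ball c (dist x₀ sk) ⊆ Ω := by
    intro c hc
    refine aux_ball_subset Ω hΩo c (hSΩ hc) _ ?_
    intro x hx
    simpa [dist_comm] using hmin x hx c hc
  -- the displacement of x₀ from the midpoint of s and sk
  set w : EuclideanSpace ℝ (Fin 3) := (1 / 2 : ℝ) • ((x₀ - s) + (x₀ - sk)) with hw
  have hnorm : ‖x₀ - s‖ = ‖x₀ - sk‖ := by
    rw [← dist_eq_norm, ← dist_eq_norm, heq]
  have hxy : x₀ - s ≠ x₀ - sk := fun h => hne (sub_right_injective h)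
  have hwlt : ‖w‖ < dist x₀ sk := by
    have := (norm_midpoint_lt_iff hnorm).2 hxy
    rw [hnorm] at this
    simpa [hw, dist_eq_norm] using this
  rw [dist_eq_norm] at hwlt
  have hsw : s + w ∈ Ω := by
    apply hballs s hs
    simp [mem_ball, dist_eq_norm, hwlt]
  have hskw : sk + w ∈ Ω := by
    apply hballs sk hsk
    simp [mem_ball, dist_eq_norm, hwlt]
  have hmid : (1 / 2 : ℝ) • (s + w) + (1 / 2 : ℝ) • (sk + w) = x₀ := by
    rw [hw]; module
  have : x₀ ∈ Ω := by
    rw [← hmid]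
    exact hΩc hsw hskw (by norm_num) (by norm_num) (by norm_num)
  exact hx₀Ω this
end

section
/- Let Ω ⊂ ℝ³ be a bounded convex open set, x₀ ∈ ∂Ω, and s, s' ∈ Ω two distinct points with |x₀ − s| = |x₀ − s'| = d, where d = min_{x ∈ ∂Ω, z ∈ {s,s'}} |x − z|. Then there exists ε > 0 such that the open ball B(x₀, ε) is contained in the closure of Ω, contradicting x₀ ∈ ∂Ω; hence no such pair s ≠ s' exists. -/
open Metric

/-- No two distinct interior source points can both attain the minimal distance
to the boundary at the same boundary minimizer `x₀`. -/
theorem stmt_2 (Ω : Set (EuclideanSpace ℝ (Fin 3)))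
    (hΩo : IsOpen Ω) (hΩc : Convex ℝ Ω) (hΩb : Bornology.IsBounded Ω)
    (x₀ : EuclideanSpace ℝ (Fin 3)) (hx₀ : x₀ ∈ frontier Ω)
    (s s' : EuclideanSpace ℝ (Fin 3)) (hs : s ∈ Ω) (hs' : s' ∈ Ω)
    (d : ℝ) (hds : dist x₀ s = d) (hds' : dist x₀ s' = d)
    (hmin : ∀ x ∈ frontier Ω, ∀ z ∈ ({s, s'} : Set (EuclideanSpace ℝ (Fin 3))),
      d ≤ dist x z) :
    s = s' := by
  by_contra hne
  have hx₀Ω : x₀ ∉ Ω := fun h => hx₀.2 (by rwa [hΩo.interior_eq])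
  set v : EuclideanSpace ℝ (Fin 3) := x₀ - s with hv
  set v' : EuclideanSpace ℝ (Fin 3) := x₀ - s' with hv'
  have hnv : ‖v‖ = d := by rw [hv, ← dist_eq_norm]; exact hds
  have hnv' : ‖v'‖ = d := by rw [hv', ← dist_eq_norm]; exact hds'
  have hvne : v ≠ v' := by
    intro h
    apply hne
    have h2 : x₀ - s = x₀ - s' := h
    exact sub_right_injective h2
  have hnotray : ¬ SameRay ℝ v v' := by
    intro h
    have := sameRay_iff_norm_sub.mp h
    rw [hnv, hnv', sub_self, abs_zero] at this
    exact hvne (sub_eq_zero.mp (norm_eq_zero.mp this))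
  have hlt : ‖v + v'‖ < 2 * d := by
    have := norm_add_lt_of_not_sameRay hnotray
    rw [hnv, hnv'] at this; linarith
  -- the two open balls are contained in Ω
  have hball : ∀ z ∈ Ω, (∀ x ∈ frontier Ω, d ≤ dist x z) → ball z d ⊆ Ω := by
    intro z hz hzmin
    have hdisj : ball z d ∩ frontier Ω = ∅ := by
      ext x
      simp only [Set.mem_inter_iff, Set.mem_empty_iff_false, iff_false, not_and]
      intro hxb hxf
      rw [mem_ball] at hxb
      have : dist x z < d := hxb
      exact absurd (hzmin x hxf) (not_le.mpr this)
    have hsub : ball z d ⊆ Ω ∪ (closure Ω)ᶜ := by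
      intro x hx
      by_cases hxc : x ∈ closure Ω
      · left
        by_contra hxΩ
        have : x ∈ frontier Ω := ⟨hxc, by rwa [hΩo.interior_eq]⟩
        have : x ∈ ball z d ∩ frontier Ω := ⟨hx, this⟩
        rw [hdisj] at this
        exact this
      · right; exact hxc
    have hconn : IsPreconnected (ball z d) := (convex_ball z d).isPreconnected
    have := hconn.subset_left_of_subset_union hΩo (isClosed_closure.isOpen_compl)
      (Set.disjoint_left.mpr (fun x hx hxc => hxc (subset_closure hx)))
      hsub ⟨z, mem_ball_self (by
        rw [← hds]; exact dist_pos.mpr (fun h => hx₀Ω (h ▸ hs))), hz⟩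
    exact this
  have hbs : ball s d ⊆ Ω := hball s hs (fun x hx => hmin x hx s (by simp))
  have hbs' : ball s' d ⊆ Ω := hball s' hs' (fun x hx => hmin x hx s' (by simp))
  -- midpoint trick
  set w : EuclideanSpace ℝ (Fin 3) := (2:ℝ)⁻¹ • (v + v') with hw
  have hnw : ‖w‖ < d := by
    rw [hw, norm_smul]
    simp only [norm_inv, Real.norm_ofNat]
    linarith [hlt]
  have ha : s + w ∈ ball s d := by
    rw [mem_ball, dist_comm, dist_eq_norm]
    simpa using hnw
  have hb : s' + w ∈ ball s' d := by
    rw [mem_ball, dist_comm, dist_eq_norm]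
    simpa using hnw
  have hmid : x₀ = (2:ℝ)⁻¹ • (s + w) + (2:ℝ)⁻¹ • (s' + w) := by
    rw [hw, hv, hv']
    module
  have : x₀ ∈ Ω := by
    rw [hmid]
    exact hΩc (hbs ha) (hbs' hb) (by norm_num) (by norm_num) (by norm_num)
  exact hx₀Ω this
end

section
/- Let c > 0 and let λ : ℝ → ℝ be a continuous nontrivial causal signal. Suppose s₁, …, s_M ∈ ℝ³ are distinct points, a₁, …, a_M are nonzero reals, and x₀ ∈ ℝ³ satisfies |x₀ − s₁| < |x₀ − s_j| for all j ≥ 2. If the function t ↦ Σ_j a_j λ(t − c⁻¹|x₀ − s_j|)/(4π|x₀ − s_j|) is identically zero on ℝ, then a₁ = 0, a contradiction; hence the sum cannot vanish identically on ℝ. -/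
open Real

/-- A finite sum of retarded potentials with a strictly nearest source point and
nonzero intensities cannot vanish identically on ℝ. -/
theorem stmt_7 (c : ℝ) (hc : 0 < c) (lam : ℝ → ℝ) (hlc : Continuous lam)
    (hcausal : ∀ t < 0, lam t = 0) (hnt : ∃ t, lam t ≠ 0)
    (M : ℕ) (hM : 0 < M) (s : Fin M → EuclideanSpace ℝ (Fin 3))
    (hsdist : Function.Injective s) (a : Fin M → ℝ) (ha : ∀ j, a j ≠ 0)
    (x₀ : EuclideanSpace ℝ (Fin 3)) (hx : ∀ j, x₀ ≠ s j)
    (hnear : ∀ j : Fin M, j ≠ ⟨0, hM⟩ → ‖x₀ - s ⟨0, hM⟩‖ < ‖x₀ - s j‖) :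
    ¬ (∀ t : ℝ, ∑ j : Fin M,
        a j * lam (t - c⁻¹ * ‖x₀ - s j‖) / (4 * π * ‖x₀ - s j‖) = 0) := by
  intro H
  set i0 : Fin M := ⟨0, hM⟩ with hi0
  set d : Fin M → ℝ := fun j => ‖x₀ - s j‖ with hd
  have hdpos : ∀ j, 0 < d j := fun j =>
    norm_sub_pos_iff.mpr (hx j)
  set S : Set ℝ := {t | lam t ≠ 0} with hS
  have hSne : S.Nonempty := hnt
  have hSbdd : BddBelow S := ⟨0, fun t ht => by
    by_contra h
    exact ht (hcausal t (lt_of_not_ge h))⟩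
  set t₀ : ℝ := sInf S with ht₀
  have hbelow : ∀ u < t₀, lam u = 0 := by
    intro u hu
    by_contra h
    exact absurd (csInf_le hSbdd h) (not_le.mpr hu)
  -- choose ε
  obtain ⟨ε, hεpos, hε⟩ : ∃ ε > 0, ∀ j : Fin M, j ≠ i0 → ε ≤ c⁻¹ * (d j - d i0) := by
    by_cases hF : ∃ j : Fin M, j ≠ i0
    · classical
      set F : Finset (Fin M) := Finset.univ.filter (fun j => j ≠ i0) with hFdef
      have hFne : F.Nonempty := ⟨hF.choose, by simp [hFdef, hF.choose_spec]⟩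
      refine ⟨F.inf' hFne (fun j => c⁻¹ * (d j - d i0)), ?_, ?_⟩
      · rw [gt_iff_lt, Finset.lt_inf'_iff]
        intro j hj
        have hj' : j ≠ i0 := by simpa [hFdef] using hj
        have := hnear j hj'
        have : 0 < d j - d i0 := sub_pos.mpr this
        positivity
      · intro j hj
        exact Finset.inf'_le _ (by simp [hFdef, hj])
    · exact ⟨1, one_pos, fun j hj => absurd ⟨j, hj⟩ hF⟩
  have key : ∀ u < t₀ + ε, lam u = 0 := by
    intro u hu
    have := H (u + c⁻¹ * d i0)
    have hsum : ∑ j : Fin M, a j * lam (u + c⁻¹ * d i0 - c⁻¹ * d j) / (4 * π * d j)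
        = a i0 * lam u / (4 * π * d i0) := by
      rw [Finset.sum_eq_single i0]
      · simp
      · intro j _ hj
        have harg : u + c⁻¹ * d i0 - c⁻¹ * d j < t₀ := by
          have h1 := hε j hj
          have : u + c⁻¹ * d i0 - c⁻¹ * d j = u - c⁻¹ * (d j - d i0) := by ring
          rw [this]
          calc u - c⁻¹ * (d j - d i0) ≤ u - ε := by linarith
            _ < t₀ := by linarith
        rw [hbelow _ harg]
        simp
      · simp
    rw [hsum] at this
    have h4 : (4 : ℝ) * π * d i0 ≠ 0 := by
      have := hdpos i0
      have := Real.pi_pos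
      positivity
    have := (div_eq_zero_iff.mp this).resolve_right h4
    rcases mul_eq_zero.mp this with h | h
    · exact absurd h (ha i0)
    · exact h
  obtain ⟨u, huS, hu⟩ := exists_lt_of_csInf_lt hSne (lt_add_of_pos_right t₀ hεpos)
  exact huS (key u hu)
end

section
/- Uniqueness for the stationary inverse point-source problem: let Ω ⊂ ℝ³ be a bounded convex open set and c > 0. For i = 1, 2, let M_i ∈ ℕ*, distinct points s_j^{(i)} ∈ Ω, intensities a_j^{(i)} > 0, and continuous nontrivial causal signals λ^{(i)} be given, and define u_i(x,t) = Σ_{j=1}^{M_i} a_j^{(i)} λ^{(i)}(t − c⁻¹|x − s_j^{(i)}|)/(4π|x − s_j^{(i)}|). If u₁(x,t) = u₂(x,t) for all x ∈ ∂Ω and all t ∈ ℝ, then M₁ = M₂ = M and there is a permutation π of {1,…,M} such that s_j^{(1)} = s_{π(j)}^{(2)} and a_j^{(1)} λ^{(1)}(t) = a_{π(j)}^{(2)} λ^{(2)}(t) for all t ∈ ℝ and all j. -/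
/-!
Merging the two families of sources, `u₁ - u₂ = 0` on `∂Ω` says that a finite superposition of
delayed signals `g_y (t - ‖x - y‖ / c) / (4π ‖x - y‖)`, one for each source point `y`, vanishes for
every `x ∈ ∂Ω`. If some `g_y` is nonzero, then at each `x ∈ ∂Ω` the earliest arrival among the
nonzero signals cannot be isolated (nothing could cancel it), so two sources `y ≠ z` arrive first
together and `x` lies on the closed set `{‖x - y‖ - ‖x - z‖ = c (onset g_z - onset g_y)}`. By Baire,
one of these finitely many sets contains a relatively open patch of `∂Ω`.

That is impossible for a bounded convex `Ω ∋ y, z`. Projecting radially onto `∂Ω` towards `y` can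
only decrease `ψ = ‖· - y‖ - ‖· - z‖`, projecting towards `z` can only increase it, and strictly so
by strict convexity of the norm when the starting point is off the line `yz`. At an exterior point
off that line close to the patch, both projections land in the patch, where `ψ` is constant.
-/

open Real Set Filter Topology Function

/-- The time at which the signal `f` is switched on (junk value `0` when `f = 0`). -/
noncomputable def onset (f : ℝ → ℝ) : ℝ := sInf (support f)

theorem eq_zero_of_lt_onset {f : ℝ → ℝ} (hf : BddBelow (support f)) {t : ℝ} (ht : t < onset f) :
    f t = 0 :=
  notMem_support.1 (notMem_of_lt_csInf ht hf)

theorem frequently_ne_zero_nhds_onset {f : ℝ → ℝ} (hf : BddBelow (support f)) (hne : f ≠ 0) :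
    ∃ᶠ t in 𝓝 (onset f), f t ≠ 0 :=
  mem_closure_iff_frequently.1 (csInf_mem_closure (support_nonempty_iff.2 hne) hf)

/-- If the earliest arrival `onset (g k) + d k` were isolated, then near that time the sum would
reduce to its `k`-th term, so `g k` would vanish on a neighbourhood of its own onset. -/
theorem exists_ne_onset_add_eq {ι : Type*} (s : Finset ι) (g : ι → ℝ → ℝ)
    (hg : ∀ i ∈ s, BddBelow (support (g i))) (d w : ι → ℝ) (hw : ∀ i ∈ s, w i ≠ 0)
    (hsum : ∀ t, ∑ i ∈ s, w i * g i (t - d i) = 0) (hne : ∃ i ∈ s, g i ≠ 0) :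
    ∃ i ∈ s, ∃ j ∈ s, i ≠ j ∧ g i ≠ 0 ∧ g j ≠ 0 ∧ onset (g i) + d i = onset (g j) + d j := by
  classical
  obtain ⟨k, hk, hmin⟩ := (s.filter (g · ≠ 0)).exists_min_image (fun i ↦ onset (g i) + d i)
    (Finset.filter_nonempty_iff.2 hne)
  rw [Finset.mem_filter] at hk
  by_contra! hfirst
  have hothers : ∀ᶠ t in 𝓝 (onset (g k) + d k), ∀ i ∈ s.erase k, g i (t - d i) = 0 := by
    rw [Filter.eventually_all_finset]
    intro i hi
    obtain ⟨hik, hi⟩ := Finset.mem_erase.1 hi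
    by_cases hgi : g i = 0
    · simp [hgi]
    have hlt : onset (g k) + d k < onset (g i) + d i :=
      (hmin i (Finset.mem_filter.2 ⟨hi, hgi⟩)).lt_of_ne (hfirst k hk.1 i hi (Ne.symm hik) hk.2 hgi)
    filter_upwards [Iio_mem_nhds hlt] with t ht
    exact eq_zero_of_lt_onset (hg i hi) (by linarith [mem_Iio.1 ht])
  have hk_zero : ∀ᶠ t in 𝓝 (onset (g k) + d k), g k (t - d k) = 0 := by
    filter_upwards [hothers] with t ht
    have h := hsum t
    rw [← Finset.add_sum_erase s _ hk.1, Finset.sum_eq_zero fun i hi ↦ by rw [ht i hi, mul_zero],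
      add_zero] at h
    exact (mul_eq_zero.1 h).resolve_left (hw k hk.1)
  refine frequently_ne_zero_nhds_onset (hg k hk.1) hk.2 ?_
  filter_upwards [((continuous_add_const (d k)).tendsto (onset (g k))).eventually hk_zero]
    with u hu using by simpa using hu

theorem IsClosed.exists_eventually_mem_nhdsWithin_of_subset_iUnion {X ι : Type*} [MetricSpace X]
    [CompleteSpace X] [Countable ι] {S : Set X} (hS : IsClosed S) (hne : S.Nonempty)
    {F : ι → Set X} (hF : ∀ i, IsClosed (F i)) (hcover : S ⊆ ⋃ i, F i) :
    ∃ i, ∃ x ∈ S, ∀ᶠ y in 𝓝[S] x, y ∈ F i := by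
  have := hS.completeSpace_coe
  have := hne.to_subtype
  obtain ⟨i, ⟨x, hx⟩, hint⟩ := nonempty_interior_of_iUnion_of_closed
    (f := fun i ↦ ((↑) : S → X) ⁻¹' F i) (fun i ↦ (hF i).preimage continuous_subtype_val)
    (eq_univ_of_forall fun y ↦ by simpa using hcover y.2)
  exact ⟨i, x, hx, by rw [nhdsWithin_eq_map_subtype_coe hx]; exact mem_interior_iff_mem_nhds.1 hint⟩

theorem preimage_add_left_mem_nhds_zero {G : Type*} [TopologicalSpace G] [AddZeroClass G]
    [ContinuousAdd G] {Ω : Set G} {p : G} (h : Ω ∈ 𝓝 p) : (p + ·) ⁻¹' Ω ∈ 𝓝 (0 : G) :=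
  (continuous_const_add p).continuousAt.preimage_mem_nhds (by simpa using h)

section ConvexGeometry

variable {V : Type*} [NormedAddCommGroup V] [NormedSpace ℝ V]

theorem dist_sub_dist_le_of_wbtw {z w p q : V} (h : Wbtw ℝ z w p) :
    dist w p - dist w q ≤ dist z p - dist z q := by
  linarith [h.dist_add_dist, dist_triangle z w q]

theorem dist_sub_dist_lt_of_wbtw [StrictConvexSpace ℝ V] {z w p q : V} (h : Wbtw ℝ z w q)
    (hzw : z ≠ w) (hpq : p ≠ q) (hz : z ∉ line[ℝ, p, q]) :
    dist z p - dist z q < dist w p - dist w q := by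
  have hstrict : dist z p < dist z w + dist w p := by
    refine dist_lt_dist_add_dist_iff.2 fun hp ↦ hz ?_
    have hpl : p ∈ line[ℝ, z, w] :=
      hp.collinear.mem_affineSpan_of_mem_of_ne (by simp) (by simp) (by simp) hzw
    have hql : q ∈ line[ℝ, z, w] :=
      h.collinear.mem_affineSpan_of_mem_of_ne (by simp) (by simp) (by simp) hzw
    exact (collinear_insert_insert_of_mem_affineSpan_pair hpl hql).mem_affineSpan_of_mem_of_ne
      (by simp) (by simp) (by simp) hpq
  linarith [h.dist_add_dist]

theorem exists_mem_notMem_affineSpan_pair [FiniteDimensional ℝ V]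
    (hV : 2 ≤ Module.finrank ℝ V) {W : Set V} (hWo : IsOpen W) (hWne : W.Nonempty) (p q : V) :
    ∃ z ∈ W, z ∉ line[ℝ, p, q] := by
  by_contra! hW
  have htop : line[ℝ, p, q] = ⊤ :=
    top_unique (hWo.affineSpan_eq_top hWne ▸ affineSpan_le.2 hW)
  have h := collinear_iff_finrank_le_one.1 (collinear_pair ℝ p q)
  rw [← direction_affineSpan, htop, AffineSubspace.direction_top, finrank_top] at h
  omega

/-- For `Ω` convex, open and bounded, `p ∈ Ω` and `y ≠ p`, the point where the ray from `p`
through `y` crosses `frontier Ω`: `y - p` rescaled to have gauge one. -/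
noncomputable def radialProj (Ω : Set V) (p y : V) : V :=
  AffineMap.lineMap p y (gauge ((p + ·) ⁻¹' Ω) (y - p))⁻¹

variable {Ω : Set V} {p : V}

theorem gauge_sub_eq_one_iff (hΩo : IsOpen Ω) (hΩc : Convex ℝ Ω) (hp : p ∈ Ω) {y : V} :
    gauge ((p + ·) ⁻¹' Ω) (y - p) = 1 ↔ y ∈ frontier Ω := by
  rw [gauge_eq_one_iff_mem_frontier (hΩc.translate_preimage_right p)
    (preimage_add_left_mem_nhds_zero (hΩo.mem_nhds hp))]
  change y - p ∈ frontier (Homeomorph.addLeft p ⁻¹' Ω) ↔ _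
  rw [← Homeomorph.preimage_frontier]
  simp

theorem one_le_gauge_sub (hΩo : IsOpen Ω) (hΩc : Convex ℝ Ω) (hp : p ∈ Ω) {y : V} (hy : y ∉ Ω) :
    1 ≤ gauge ((p + ·) ⁻¹' Ω) (y - p) := by
  refine not_lt.1 fun h ↦ hy ?_
  rw [gauge_lt_one_iff_mem_interior (hΩc.translate_preimage_right p)
    (preimage_add_left_mem_nhds_zero (hΩo.mem_nhds hp)),
    (hΩo.preimage (continuous_const_add p)).interior_eq] at h
  simpa using h

theorem gauge_sub_pos (hΩo : IsOpen Ω) (hΩb : Bornology.IsBounded Ω) (hp : p ∈ Ω) {y : V}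
    (hy : y ≠ p) : 0 < gauge ((p + ·) ⁻¹' Ω) (y - p) :=
  (gauge_pos (absorbent_nhds_zero (preimage_add_left_mem_nhds_zero (hΩo.mem_nhds hp)))
    (NormedSpace.isVonNBounded_iff ℝ |>.2
      ((isometry_add_left p).antilipschitz.isBounded_preimage hΩb))).2 (sub_ne_zero.2 hy)

theorem radialProj_mem_frontier (hΩo : IsOpen Ω) (hΩc : Convex ℝ Ω)
    (hΩb : Bornology.IsBounded Ω) (hp : p ∈ Ω) {y : V} (hy : y ≠ p) :
    radialProj Ω p y ∈ frontier Ω := by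
  rw [← gauge_sub_eq_one_iff hΩo hΩc hp, radialProj, AffineMap.lineMap_apply, vsub_eq_sub,
    vadd_eq_add, add_sub_cancel_right, gauge_smul_of_nonneg (inv_nonneg.2 (gauge_nonneg _)),
    smul_eq_mul, inv_mul_cancel₀ (gauge_sub_pos hΩo hΩb hp hy).ne']

theorem radialProj_eq_self (hΩo : IsOpen Ω) (hΩc : Convex ℝ Ω) (hp : p ∈ Ω) {x : V}
    (hx : x ∈ frontier Ω) : radialProj Ω p x = x := by
  rw [radialProj, (gauge_sub_eq_one_iff hΩo hΩc hp).2 hx, inv_one, AffineMap.lineMap_apply_one]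

theorem continuousAt_radialProj (hΩo : IsOpen Ω) (hΩc : Convex ℝ Ω)
    (hΩb : Bornology.IsBounded Ω) (hp : p ∈ Ω) {y : V} (hy : y ≠ p) :
    ContinuousAt (radialProj Ω p) y := by
  have hgauge := continuous_gauge (hΩc.translate_preimage_right p)
    (preimage_add_left_mem_nhds_zero (hΩo.mem_nhds hp))
  have hinv : ContinuousAt (fun y ↦ (gauge ((p + ·) ⁻¹' Ω) (y - p))⁻¹) y :=
    (hgauge.comp (continuous_sub_right p)).continuousAt.inv₀ (gauge_sub_pos hΩo hΩb hp hy).ne'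
  unfold radialProj
  simp only [AffineMap.lineMap_apply_module]
  fun_prop

theorem tendsto_radialProj (hΩo : IsOpen Ω) (hΩc : Convex ℝ Ω) (hΩb : Bornology.IsBounded Ω)
    (hp : p ∈ Ω) {x : V} (hx : x ∈ frontier Ω) :
    Tendsto (radialProj Ω p) (𝓝 x) (𝓝[frontier Ω] x) := by
  have hxp : x ≠ p := fun h ↦ (hΩo.frontier_eq ▸ hx).2 (h ▸ hp)
  refine tendsto_nhdsWithin_iff.2 ⟨?_, ?_⟩
  · simpa [ContinuousAt, radialProj_eq_self hΩo hΩc hp hx] using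
      continuousAt_radialProj hΩo hΩc hΩb hp hxp
  · filter_upwards [isOpen_ne.mem_nhds hxp] with y hy
      using radialProj_mem_frontier hΩo hΩc hΩb hp hy

theorem wbtw_radialProj (hΩo : IsOpen Ω) (hΩc : Convex ℝ Ω) (hp : p ∈ Ω) {y : V} (hy : y ∉ Ω) :
    Wbtw ℝ y (radialProj Ω p y) p := by
  have h := one_le_gauge_sub hΩo hΩc hp hy
  exact Wbtw.symm ⟨_, ⟨inv_nonneg.2 (by linarith), inv_le_one_of_one_le₀ h⟩, rfl⟩

end ConvexGeometry

theorem Function.Injective.sum_extend_mul {ι V : Type*} [Fintype ι] [DecidableEq V] {s : ι → V}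
    (hs : Injective s) {P : Finset V} (hP : ∀ j, s j ∈ P) (a : ι → ℝ) (F : V → ℝ) :
    ∑ y ∈ P, extend s a 0 y * F y = ∑ j, a j * F (s j) := by
  rw [← Finset.sum_subset (s₁ := Finset.univ.image s) (fun y hy ↦ by
      obtain ⟨j, -, rfl⟩ := Finset.mem_image.1 hy; exact hP j)
    (fun y _ hy ↦ by
      rw [extend_apply' _ _ _ fun ⟨j, hj⟩ ↦ hy (hj ▸ Finset.mem_image_of_mem s (Finset.mem_univ j)),
        Pi.zero_apply, zero_mul]),
    Finset.sum_image hs.injOn]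
  simp only [hs.extend_apply]

section Uniqueness

variable {V : Type*} [NormedAddCommGroup V] [NormedSpace ℝ V] [StrictConvexSpace ℝ V]
  [FiniteDimensional ℝ V]

theorem not_eventually_dist_sub_dist_eq_on_frontier (hV : 2 ≤ Module.finrank ℝ V) {Ω : Set V}
    (hΩo : IsOpen Ω) (hΩc : Convex ℝ Ω) (hΩb : Bornology.IsBounded Ω) {p q : V} (hp : p ∈ Ω)
    (hq : q ∈ Ω) (hpq : p ≠ q) {x : V} (hx : x ∈ frontier Ω) (H : ℝ) :
    ¬ ∀ᶠ y in 𝓝[frontier Ω] x, dist y p - dist y q = H := by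
  intro hpatch
  obtain ⟨U, hU, hUo, hxU⟩ := mem_nhds_iff.1 <|
    ((tendsto_radialProj hΩo hΩc hΩb hp hx).eventually hpatch).and
      ((tendsto_radialProj hΩo hΩc hΩb hq hx).eventually hpatch)
  have hxext : x ∈ closure (closure Ω)ᶜ := by
    rw [closure_compl, hΩc.interior_closure_eq_interior_of_nonempty_interior
      ⟨p, by rwa [hΩo.interior_eq]⟩, hΩo.interior_eq]
    exact (hΩo.frontier_eq ▸ hx).2
  obtain ⟨z, ⟨hzU, hzΩ⟩, hzL⟩ := exists_mem_notMem_affineSpan_pair hV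
    (hUo.inter isClosed_closure.isOpen_compl) (mem_closure_iff.1 hxext U hUo hxU) p q
  have hzΩ' : z ∉ Ω := fun h ↦ hzΩ (subset_closure h)
  have hle := dist_sub_dist_le_of_wbtw (q := q) (wbtw_radialProj hΩo hΩc hp hzΩ')
  have hlt := dist_sub_dist_lt_of_wbtw (wbtw_radialProj hΩo hΩc hq hzΩ')
    (fun h ↦ hzΩ (h ▸ frontier_subset_closure
      (radialProj_mem_frontier hΩo hΩc hΩb hq (ne_of_mem_of_not_mem hq hzΩ').symm))) hpq hzL
  linarith [(hU hzU).1, (hU hzU).2]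

theorem eq_zero_of_sum_retarded_eq_zero (hV : 2 ≤ Module.finrank ℝ V) {Ω : Set V}
    (hΩo : IsOpen Ω) (hΩc : Convex ℝ Ω) (hΩb : Bornology.IsBounded Ω) {c : ℝ} (hc : c ≠ 0)
    (P : Finset V) (hP : ∀ y ∈ P, y ∈ Ω) (g : V → ℝ → ℝ) (hg : ∀ y ∈ P, BddBelow (support (g y)))
    (hsum : ∀ x ∈ frontier Ω, ∀ t,
      ∑ y ∈ P, g y (t - c⁻¹ * ‖x - y‖) / (4 * π * ‖x - y‖) = 0) :
    ∀ y ∈ P, g y = 0 := by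
  by_contra! ⟨y₀, hy₀, hgy₀⟩
  have hcover : frontier Ω ⊆ ⋃ yz : P.offDiag,
      {x | dist x yz.1.1 - dist x yz.1.2 = c * (onset (g yz.1.2) - onset (g yz.1.1))} := by
    intro x hx
    have hr : ∀ y ∈ P, 4 * π * ‖x - y‖ ≠ 0 := fun y hy ↦ by
      have : x ≠ y := fun h ↦ (hΩo.frontier_eq ▸ hx).2 (h ▸ hP y hy)
      have := norm_pos_iff.2 (sub_ne_zero.2 this)
      positivity
    obtain ⟨y, hy, z, hz, hyz, -, -, heq⟩ := exists_ne_onset_add_eq P g hg (fun y ↦ c⁻¹ * ‖x - y‖)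
      (fun y ↦ (4 * π * ‖x - y‖)⁻¹) (fun y hy ↦ inv_ne_zero (hr y hy))
      (fun t ↦ by simpa only [div_eq_inv_mul] using hsum x hx t) ⟨y₀, hy₀, hgy₀⟩
    refine mem_iUnion.2 ⟨⟨(y, z), Finset.mem_offDiag.2 ⟨hy, hz, hyz⟩⟩, ?_⟩
    change dist x y - dist x z = _
    rw [dist_eq_norm, dist_eq_norm]
    field_simp at heq
    linarith
  have : Nontrivial V := Module.nontrivial_of_finrank_pos (R := ℝ) (by omega)
  have hfront : (frontier Ω).Nonempty := nonempty_frontier_iff.2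
    ⟨⟨y₀, hP y₀ hy₀⟩, fun h ↦ NormedSpace.unbounded_univ ℝ V (h ▸ hΩb)⟩
  obtain ⟨⟨⟨y, z⟩, hyz⟩, x, hx, hev⟩ :=
    isClosed_frontier.exists_eventually_mem_nhdsWithin_of_subset_iUnion hfront
      (fun _ ↦ isClosed_eq (by fun_prop) continuous_const) hcover
  obtain ⟨hy, hz, hyz⟩ := Finset.mem_offDiag.1 hyz
  exact not_eventually_dist_sub_dist_eq_on_frontier hV hΩo hΩc hΩb (hP y hy) (hP z hz) hyz hx _ hev

/-- `extend sᵢ aᵢ 0 y` is the intensity of the source of `uᵢ` located at `y` (zero if none). -/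
theorem extend_mul_eq_extend_mul_of_sum_retarded_eq (hV : 2 ≤ Module.finrank ℝ V) {Ω : Set V}
    (hΩo : IsOpen Ω) (hΩc : Convex ℝ Ω) (hΩb : Bornology.IsBounded Ω) {c : ℝ} (hc : c ≠ 0)
    {ι κ : Type*} [Fintype ι] [Fintype κ] {s₁ : ι → V} {s₂ : κ → V} (hs₁i : Injective s₁)
    (hs₂i : Injective s₂) (hs₁Ω : ∀ j, s₁ j ∈ Ω) (hs₂Ω : ∀ j, s₂ j ∈ Ω) (a₁ : ι → ℝ) (a₂ : κ → ℝ)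
    {lam₁ lam₂ : ℝ → ℝ} (hl₁ : BddBelow (support lam₁)) (hl₂ : BddBelow (support lam₂))
    (hdata : ∀ x ∈ frontier Ω, ∀ t : ℝ,
      ∑ j, a₁ j * lam₁ (t - c⁻¹ * ‖x - s₁ j‖) / (4 * π * ‖x - s₁ j‖) =
      ∑ j, a₂ j * lam₂ (t - c⁻¹ * ‖x - s₂ j‖) / (4 * π * ‖x - s₂ j‖)) (y : V) (t : ℝ) :
    extend s₁ a₁ 0 y * lam₁ t = extend s₂ a₂ 0 y * lam₂ t := by
  classical
  set P := Finset.univ.image s₁ ∪ Finset.univ.image s₂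
  have hs₁P j : s₁ j ∈ P := Finset.mem_union_left _ (Finset.mem_image_of_mem _ (Finset.mem_univ j))
  have hs₂P j : s₂ j ∈ P := Finset.mem_union_right _ (Finset.mem_image_of_mem _ (Finset.mem_univ j))
  by_cases hy : y ∈ P
  swap
  · rw [extend_apply' _ _ _ fun ⟨j, hj⟩ ↦ hy (hj ▸ hs₁P j),
      extend_apply' _ _ _ fun ⟨j, hj⟩ ↦ hy (hj ▸ hs₂P j)]
    simp
  refine sub_eq_zero.1 (congrFun (eq_zero_of_sum_retarded_eq_zero hV hΩo hΩc hΩb hc P ?_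
    (fun y t ↦ extend s₁ a₁ 0 y * lam₁ t - extend s₂ a₂ 0 y * lam₂ t) (fun _ _ ↦ ?_) ?_ y hy) t)
  · simp only [P, Finset.mem_union, Finset.mem_image]
    rintro y (⟨j, -, rfl⟩ | ⟨j, -, rfl⟩)
    exacts [hs₁Ω j, hs₂Ω j]
  · refine (hl₁.union hl₂).mono fun t ht ↦ ?_
    by_contra h
    simp only [mem_union, mem_support, not_or, not_not] at h
    simp [h.1, h.2] at ht
  · intro x hx t
    simp only [sub_div, Finset.sum_sub_distrib, mul_div_assoc]
    rw [hs₁i.sum_extend_mul hs₁P a₁ (fun y ↦ lam₁ (t - c⁻¹ * ‖x - y‖) / (4 * π * ‖x - y‖)),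
      hs₂i.sum_extend_mul hs₂P a₂ (fun y ↦ lam₂ (t - c⁻¹ * ‖x - y‖) / (4 * π * ‖x - y‖)),
      sub_eq_zero]
    simpa only [mul_div_assoc] using hdata x hx t

end Uniqueness

theorem Function.Injective.extend_eq_zero_iff {ι V : Type*} {s : ι → V} (hs : Injective s)
    {a : ι → ℝ} (ha : ∀ j, a j ≠ 0) {y : V} : extend s a 0 y = 0 ↔ y ∉ range s := by
  refine ⟨?_, fun hy ↦ extend_apply' _ _ _ hy⟩
  rintro h ⟨j, rfl⟩
  exact ha j (hs.extend_apply a 0 j ▸ h)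

theorem Function.Injective.exists_equiv_of_range_eq {ι κ V : Type*} {s₁ : ι → V} {s₂ : κ → V}
    (hs₁ : Injective s₁) (hs₂ : Injective s₂) (h : range s₁ = range s₂) :
    ∃ σ : ι ≃ κ, ∀ j, s₂ (σ j) = s₁ j :=
  ⟨(Equiv.ofInjective s₁ hs₁).trans ((Equiv.setCongr h).trans (Equiv.ofInjective s₂ hs₂).symm),
    fun _ ↦ Equiv.apply_ofInjective_symm hs₂ _⟩

theorem eq_zero_iff_eq_zero_of_mul_eq_mul {a b : ℝ} {f g : ℝ → ℝ} (h : ∀ t, a * f t = b * g t)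
    (hf : ∃ t, f t ≠ 0) (hg : ∃ t, g t ≠ 0) : a = 0 ↔ b = 0 := by
  obtain ⟨t₁, ht₁⟩ := hf
  obtain ⟨t₂, ht₂⟩ := hg
  constructor
  · intro ha
    simpa [ha, ht₂] using (h t₂).symm
  · intro hb
    simpa [hb, ht₁] using h t₁

theorem stmt_8_general (Ω : Set (EuclideanSpace ℝ (Fin 3)))
    (hΩo : IsOpen Ω) (hΩc : Convex ℝ Ω) (hΩb : Bornology.IsBounded Ω)
    (c : ℝ) (hc : 0 < c) (M₁ M₂ : ℕ)
    (s₁ : Fin M₁ → EuclideanSpace ℝ (Fin 3)) (s₂ : Fin M₂ → EuclideanSpace ℝ (Fin 3))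
    (hs₁Ω : ∀ j, s₁ j ∈ Ω) (hs₂Ω : ∀ j, s₂ j ∈ Ω)
    (hs₁i : Function.Injective s₁) (hs₂i : Function.Injective s₂)
    (a₁ : Fin M₁ → ℝ) (a₂ : Fin M₂ → ℝ) (ha₁ : ∀ j, 0 < a₁ j) (ha₂ : ∀ j, 0 < a₂ j)
    (lam₁ lam₂ : ℝ → ℝ)
    (hcaus₁ : ∀ t < 0, lam₁ t = 0) (hcaus₂ : ∀ t < 0, lam₂ t = 0)
    (hnt₁ : ∃ t, lam₁ t ≠ 0) (hnt₂ : ∃ t, lam₂ t ≠ 0)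
    (hdata : ∀ x ∈ frontier Ω, ∀ t : ℝ,
      ∑ j : Fin M₁, a₁ j * lam₁ (t - c⁻¹ * ‖x - s₁ j‖) / (4 * π * ‖x - s₁ j‖) =
      ∑ j : Fin M₂, a₂ j * lam₂ (t - c⁻¹ * ‖x - s₂ j‖) / (4 * π * ‖x - s₂ j‖)) :
    M₁ = M₂ ∧ ∃ σ : Fin M₁ ≃ Fin M₂, ∀ j : Fin M₁,
      s₁ j = s₂ (σ j) ∧ ∀ t : ℝ, a₁ j * lam₁ t = a₂ (σ j) * lam₂ t := by
  have hG := extend_mul_eq_extend_mul_of_sum_retarded_eq (by simp) hΩo hΩc hΩb hc.ne' hs₁i hs₂i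
    hs₁Ω hs₂Ω a₁ a₂ ⟨0, fun t ht ↦ not_lt.1 fun h ↦ ht (hcaus₁ t h)⟩
    ⟨0, fun t ht ↦ not_lt.1 fun h ↦ ht (hcaus₂ t h)⟩ hdata
  have hrange : range s₁ = range s₂ := by
    ext y
    simpa only [hs₁i.extend_eq_zero_iff (ha₁ · |>.ne'), hs₂i.extend_eq_zero_iff (ha₂ · |>.ne'),
      not_iff_not] using eq_zero_iff_eq_zero_of_mul_eq_mul (hG y) hnt₁ hnt₂
  obtain ⟨σ, hσ⟩ := hs₁i.exists_equiv_of_range_eq hs₂i hrange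
  refine ⟨by simpa using Fintype.card_congr σ, σ, fun j ↦ ⟨(hσ j).symm, fun t ↦ ?_⟩⟩
  have h := hG (s₁ j) t
  rwa [hs₁i.extend_apply, ← hσ j, hs₂i.extend_apply] at h

/-- Theorem 2.2: uniqueness for the stationary inverse point-source problem. -/
theorem stmt_8 (Ω : Set (EuclideanSpace ℝ (Fin 3)))
    (hΩo : IsOpen Ω) (hΩc : Convex ℝ Ω) (hΩb : Bornology.IsBounded Ω)
    (c : ℝ) (hc : 0 < c) (M₁ M₂ : ℕ) (hM₁ : 0 < M₁) (hM₂ : 0 < M₂)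
    (s₁ : Fin M₁ → EuclideanSpace ℝ (Fin 3)) (s₂ : Fin M₂ → EuclideanSpace ℝ (Fin 3))
    (hs₁Ω : ∀ j, s₁ j ∈ Ω) (hs₂Ω : ∀ j, s₂ j ∈ Ω)
    (hs₁i : Function.Injective s₁) (hs₂i : Function.Injective s₂)
    (a₁ : Fin M₁ → ℝ) (a₂ : Fin M₂ → ℝ) (ha₁ : ∀ j, 0 < a₁ j) (ha₂ : ∀ j, 0 < a₂ j)
    (lam₁ lam₂ : ℝ → ℝ) (hl₁ : Continuous lam₁) (hl₂ : Continuous lam₂)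
    (hcaus₁ : ∀ t < 0, lam₁ t = 0) (hcaus₂ : ∀ t < 0, lam₂ t = 0)
    (hnt₁ : ∃ t, lam₁ t ≠ 0) (hnt₂ : ∃ t, lam₂ t ≠ 0)
    (hdata : ∀ x ∈ frontier Ω, ∀ t : ℝ,
      ∑ j : Fin M₁, a₁ j * lam₁ (t - c⁻¹ * ‖x - s₁ j‖) / (4 * π * ‖x - s₁ j‖) =
      ∑ j : Fin M₂, a₂ j * lam₂ (t - c⁻¹ * ‖x - s₂ j‖) / (4 * π * ‖x - s₂ j‖)) :
    M₁ = M₂ ∧ ∃ σ : Fin M₁ ≃ Fin M₂, ∀ j : Fin M₁,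
      s₁ j = s₂ (σ j) ∧ ∀ t : ℝ, a₁ j * lam₁ t = a₂ (σ j) * lam₂ t :=
  stmt_8_general Ω hΩo hΩc hΩb c hc M₁ M₂ s₁ s₂ hs₁Ω hs₂Ω hs₁i hs₂i a₁ a₂ ha₁ ha₂ lam₁ lam₂ hcaus₁
    hcaus₂ hnt₁ hnt₂ hdata
end

section
/- Let s : ℝ → ℝ³ be continuously differentiable with sup_t |s'(t)| =: v_max < c. Then for every x ∈ ℝ³ and t ∈ ℝ, the function F(τ) = τ + c⁻¹|x − s(τ)| is strictly increasing (whenever x ≠ s(τ), with F Lipschitz and increasing in general), satisfies F(τ) → ±∞ as τ → ±∞, and hence the retarded time equation F(τ) = t has exactly one solution τ = τ(x,t). -/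
open Filter

/- Write F(τ) = τ + c⁻¹‖x - s τ‖. Since s is v-Lipschitz with v < c, the reverse triangle
inequality gives F b - F a ≥ (1 - v/c)(b - a) for a ≤ b: F grows at least like a line of positive
slope. Hence F is strictly increasing and tends to ±∞ at ±∞, so by continuity it is a bijection
of ℝ and F(τ) = t has exactly one solution. -/

section Expanding

variable {f : ℝ → ℝ} {k : ℝ}

theorem strictMono_of_forall_mul_sub_le (hk : 0 < k)
    (hf : ∀ a b, a ≤ b → k * (b - a) ≤ f b - f a) : StrictMono f := fun a b hab => by
  have := hf a b hab.le
  nlinarith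

theorem tendsto_atTop_of_forall_mul_sub_le (hk : 0 < k)
    (hf : ∀ a b, a ≤ b → k * (b - a) ≤ f b - f a) : Tendsto f atTop atTop := by
  have hline : Tendsto (fun τ => f 0 + k * τ) atTop atTop :=
    tendsto_atTop_add_const_left _ _ (tendsto_id.const_mul_atTop hk)
  refine tendsto_atTop_mono' _ ?_ hline
  filter_upwards [eventually_ge_atTop 0] with τ hτ
  linarith [hf 0 τ hτ]

theorem tendsto_atBot_of_forall_mul_sub_le (hk : 0 < k)
    (hf : ∀ a b, a ≤ b → k * (b - a) ≤ f b - f a) : Tendsto f atBot atBot := by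
  have hline : Tendsto (fun τ => f 0 + k * τ) atBot atBot :=
    tendsto_atBot_add_const_left _ _ (tendsto_id.const_mul_atBot hk)
  refine tendsto_atBot_mono' _ ?_ hline
  filter_upwards [eventually_le_atBot 0] with τ hτ
  linarith [hf τ 0 hτ]

end Expanding

theorem retarded_mul_sub_le {E : Type*} [NormedAddCommGroup E] {c v : ℝ} (hc : 0 < c)
    {s : ℝ → E} (hs : ∀ a b, ‖s b - s a‖ ≤ v * ‖b - a‖) (x : E) (a b : ℝ) (hab : a ≤ b) :
    (1 - c⁻¹ * v) * (b - a) ≤ (b + c⁻¹ * ‖x - s b‖) - (a + c⁻¹ * ‖x - s a‖) := by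
  have hdisp : ‖x - s a‖ - ‖x - s b‖ ≤ v * (b - a) := calc
    ‖x - s a‖ - ‖x - s b‖ ≤ ‖(x - s a) - (x - s b)‖ := norm_sub_norm_le _ _
    _ = ‖s b - s a‖ := by rw [sub_sub_sub_cancel_left]
    _ ≤ v * (b - a) := by simpa [Real.norm_eq_abs, abs_of_nonneg (sub_nonneg.2 hab)] using hs a b
  have := mul_le_mul_of_nonneg_left hdisp (inv_pos.2 hc).le
  linarith

/-- Existence and uniqueness of the retarded time for a globally subluminal trajectory. -/
theorem stmt_11 (c : ℝ) (hc : 0 < c) (s : ℝ → EuclideanSpace ℝ (Fin 3))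
    (hs : ContDiff ℝ 1 s) (vmax : ℝ) (hvmax : vmax < c)
    (hv : ∀ t : ℝ, ‖deriv s t‖ ≤ vmax)
    (x : EuclideanSpace ℝ (Fin 3)) (t : ℝ) :
    StrictMono (fun τ : ℝ => τ + c⁻¹ * ‖x - s τ‖) ∧
    Tendsto (fun τ : ℝ => τ + c⁻¹ * ‖x - s τ‖) atTop atTop ∧
    Tendsto (fun τ : ℝ => τ + c⁻¹ * ‖x - s τ‖) atBot atBot ∧
    ∃! τ : ℝ, τ + c⁻¹ * ‖x - s τ‖ = t := by
  have hdiff : Differentiable ℝ s := hs.differentiable one_ne_zero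
  have hlip : ∀ a b, ‖s b - s a‖ ≤ vmax * ‖b - a‖ := fun a b =>
    Convex.norm_image_sub_le_of_norm_deriv_le (fun y _ => hdiff y) (fun y _ => hv y)
      convex_univ (Set.mem_univ a) (Set.mem_univ b)
  have hk : 0 < 1 - c⁻¹ * vmax := by
    rw [sub_pos, inv_mul_lt_iff₀ hc, mul_one]
    exact hvmax
  have hgrowth := retarded_mul_sub_le hc hlip x
  have hmono := strictMono_of_forall_mul_sub_le hk hgrowth
  have htop := tendsto_atTop_of_forall_mul_sub_le hk hgrowth
  have hbot := tendsto_atBot_of_forall_mul_sub_le hk hgrowth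
  have hcont : Continuous fun τ : ℝ => τ + c⁻¹ * ‖x - s τ‖ := by
    fun_prop
  exact ⟨hmono, htop, hbot,
    Function.Bijective.existsUnique ⟨hmono.injective, hcont.surjective htop hbot⟩ t⟩
end

section
/- Let f : ℝ → ℝ be continuous and causal, c > 0, and s, z ∈ ℝ³ with s ≠ z. If f(t − c⁻¹|x − s|)/|x − s| = f(t − c⁻¹|x − z|)/|x − z| for all t ∈ ℝ and all x in some sphere ∂B(x₀, R) of ℝ³ containing points x with |x − s| ≠ |x − z|, then f is identically zero; i.e., two retarded potentials with the same nontrivial causal signal but distinct source points cannot agree on such a sphere for all time. -/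
open Metric

/-- If a causal signal satisfies a delay recursion `f t = k * f (t - d)` with `d > 0`,
then it vanishes identically. -/
lemma aux_delay (f : ℝ → ℝ) (hcausal : ∀ t < 0, f t = 0) (k d : ℝ) (hd : 0 < d)
    (h : ∀ t, f t = k * f (t - d)) : ∀ t, f t = 0 := by
  have key : ∀ n : ℕ, ∀ t, f t = k ^ n * f (t - n * d) := by
    intro n
    induction n with
    | zero => intro t; simp
    | succ n ih =>
      intro t
      have : t - d - n * d = t - (n + 1 : ℕ) * d := by push_cast; ring
      rw [h t, ih (t - d), this, ← mul_assoc, ← pow_succ']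
  intro t
  obtain ⟨n, hn⟩ := exists_nat_gt (t / d)
  have hlt : t < n * d := by
    have := (div_lt_iff₀ hd).mp hn
    linarith
  rw [key n t, hcausal _ (by linarith), mul_zero]

/-- Two retarded potentials with the same causal signal but distinct source points cannot
agree for all time on a sphere containing points at unequal distances, unless the signal
vanishes identically. -/
theorem stmt_16 (f : ℝ → ℝ) (hf : Continuous f) (c : ℝ) (hc : 0 < c)
    (s z : EuclideanSpace ℝ (Fin 3)) (hsz : s ≠ z)
    (hcausal : ∀ t < 0, f t = 0)
    (x₀ : EuclideanSpace ℝ (Fin 3)) (R : ℝ) (hR : 0 < R)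
    (hxne : ∃ x ∈ sphere x₀ R, ‖x - s‖ ≠ ‖x - z‖)
    (hagree : ∀ t : ℝ, ∀ x ∈ sphere x₀ R,
      f (t - c⁻¹ * ‖x - s‖) / ‖x - s‖ = f (t - c⁻¹ * ‖x - z‖) / ‖x - z‖) :
    ∀ t : ℝ, f t = 0 := by
  obtain ⟨x, hx, hab⟩ := hxne
  set a := ‖x - s‖ with ha
  set b := ‖x - z‖ with hb
  have ha0 : 0 ≤ a := norm_nonneg _
  have hb0 : 0 ≤ b := norm_nonneg _
  have h2 : ∀ u : ℝ, f u / a = f (u - c⁻¹ * (b - a)) / b := by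
    intro u
    have h1 := hagree (u + c⁻¹ * a) x hx
    have e1 : u + c⁻¹ * a - c⁻¹ * a = u := by ring
    have e2 : u + c⁻¹ * a - c⁻¹ * b = u - c⁻¹ * (b - a) := by ring
    rw [e1, e2] at h1
    exact h1
  rcases eq_or_lt_of_le ha0 with ha0' | ha0'
  · -- a = 0, so b ≠ 0 and f ≡ 0
    have hbne : b ≠ 0 := fun h => hab (by rw [← ha0', h])
    intro t
    have := h2 (t + c⁻¹ * (b - a))
    have e : t + c⁻¹ * (b - a) - c⁻¹ * (b - a) = t := by ring
    rw [e, ← ha0'] at this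
    simp only [div_zero] at this
    exact (div_eq_zero_iff.mp this.symm).resolve_right hbne
  rcases eq_or_lt_of_le hb0 with hb0' | hb0'
  · -- b = 0, so a ≠ 0 and f ≡ 0
    intro t
    have := h2 t
    rw [← hb0'] at this
    simp only [div_zero] at this
    exact (div_eq_zero_iff.mp this).resolve_right (ne_of_gt ha0')
  -- both a, b > 0
  rcases lt_or_gt_of_ne hab with hlt | hgt
  · -- a < b : f u = (a/b) * f (u - c⁻¹*(b-a))
    refine aux_delay f hcausal (a / b) (c⁻¹ * (b - a))
      (mul_pos (inv_pos.mpr hc) (by linarith)) ?_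
    intro u
    have := h2 u
    field_simp at this ⊢
    linarith [this]
  · -- b < a : f v = (b/a) * f (v - c⁻¹*(a-b))
    refine aux_delay f hcausal (b / a) (c⁻¹ * (a - b))
      (mul_pos (inv_pos.mpr hc) (by linarith)) ?_
    intro v
    have := h2 (v + c⁻¹ * (b - a))
    have e : v + c⁻¹ * (b - a) - c⁻¹ * (b - a) = v := by ring
    rw [e] at this
    have e2 : v + c⁻¹ * (b - a) = v - c⁻¹ * (a - b) := by ring
    rw [e2] at this
    field_simp at this ⊢
    linarith [this]
end
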